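/- Let $v^j : (\mathbb{C}^{nj},0) \to (\mathbb{C}^N,0)$ denote the iterated Segre mappings of a formal generic manifold $\mathcal{M}$, defined by $v^0 := 0$ and $v^j(t^1,\ldots,t^j) := \gamma(\bar v^{j-1}(t^1,\ldots,t^{j-1}), t^j)$ for a Segre variety mapping $\gamma$. Then for every nonnegative integer $j$, there exists a formal map $\xi^j : (\mathbb{C}^{n(j+1)},0) \to (\mathbb{C}^n,0)$ such that $v^{j+2}(t^1,\ldots,t^{j+1}, \xi^j(t^1,\ldots,t^{j+1})) = v^j(t^1,\ldots,t^j)$ identically as formal power series. -/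

import Mathlib

open MvPowerSeries

/-- Formal composition (substitution) of power series: `f` evaluated on the family `a`.
This is the standard substitution, meaningful when each `a s` has zero constant
coefficient (so that each coefficient of the result is a finite sum). -/
noncomputable def fsubst {σ τ : Type*} [Fintype σ] [DecidableEq σ]
    (a : σ → MvPowerSeries τ ℂ) (f : MvPowerSeries σ ℂ) : MvPowerSeries τ ℂ :=
  fun e => MvPowerSeries.coeff (R := ℂ) e
    (∑ m ∈ Finset.Iic (Finsupp.equivFunOnFinite.symm fun _ => (e.sum fun _ x => x)),
      MvPowerSeries.coeff (R := ℂ) m f • ∏ s : σ, (a s) ^ m s)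

/-- The formal partial derivative `∂f/∂x_s` of a formal power series. -/
noncomputable def pd {σ : Type*} (s : σ) (f : MvPowerSeries σ ℂ) : MvPowerSeries σ ℂ :=
  fun m => ((m s : ℂ) + 1) * MvPowerSeries.coeff (R := ℂ) (m + Finsupp.single s 1) f

/-- The iterated formal partial derivative `∂^ν f`. -/
noncomputable def iterD {σ : Type*} (ν : σ →₀ ℕ) (f : MvPowerSeries σ ℂ) :
    MvPowerSeries σ ℂ :=
  fun m => ((ν.prod fun s e => Nat.descFactorial (m s + e) e : ℕ) : ℂ) *
    MvPowerSeries.coeff (R := ℂ) (m + ν) f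

/-- A formal power series is convergent if its coefficients grow at most
geometrically. -/
def Convergent {σ : Type*} (f : MvPowerSeries σ ℂ) : Prop :=
  ∃ C r : ℝ, 0 < r ∧ ∀ m : σ →₀ ℕ,
    ‖MvPowerSeries.coeff (R := ℂ) m f‖ ≤ C * r ^ (m.sum fun _ e => e)

/-- Coefficientwise complex conjugation of a formal power series. -/
noncomputable def conjS {σ : Type*} (f : MvPowerSeries σ ℂ) : MvPowerSeries σ ℂ :=
  fun m => starRingEnd ℂ (MvPowerSeries.coeff (R := ℂ) m f)

/-- The Segre variety mapping `γ(ζ,t) = (μ(ζ,t), Q(μ(ζ,t),ζ))` associated to `μ` and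
`Q`, as a family of formal power series in the variables `(ζ,t)`; here `Z = (z,w) ∈
ℂ^n × ℂ^d`. -/
noncomputable def gamFam {n d : ℕ}
    (Q : Fin d → MvPowerSeries (Fin n ⊕ (Fin n ⊕ Fin d)) ℂ)
    (μ : Fin n → MvPowerSeries ((Fin n ⊕ Fin d) ⊕ Fin n) ℂ) :
    (Fin n ⊕ Fin d) → MvPowerSeries ((Fin n ⊕ Fin d) ⊕ Fin n) ℂ :=
  Sum.elim μ (fun j =>
    fsubst (Sum.elim μ (fun a => MvPowerSeries.X (Sum.inl a))) (Q j))

/-- The reality condition `Q(z, χ, Q̄(χ, z, w)) = w` for the defining series of a formal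
generic manifold, written in the variables `((z,w), χ)`. -/
def RealityCondition {n d : ℕ}
    (Q : Fin d → MvPowerSeries (Fin n ⊕ (Fin n ⊕ Fin d)) ℂ) : Prop :=
  ∀ j, fsubst (τ := (Fin n ⊕ Fin d) ⊕ Fin n)
    (Sum.elim (fun i => MvPowerSeries.X (Sum.inl (Sum.inl i)))
      (Sum.elim (fun c => MvPowerSeries.X (Sum.inr c))
        (fun t => fsubst
          (Sum.elim (fun i => MvPowerSeries.X (Sum.inr i))
            (Sum.elim (fun i => MvPowerSeries.X (Sum.inl (Sum.inl i)))
              (fun w => MvPowerSeries.X (Sum.inl (Sum.inr w)))))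
          (conjS (Q t)))))
    (Q j) = MvPowerSeries.X (Sum.inl (Sum.inr j))

/-- The iterated Segre mappings `v⁰ := 0`,
`v^j(t¹,…,tʲ) := γ(v̄^{j-1}(t¹,…,t^{j-1}), tʲ)` of a formal generic manifold, as
families of formal power series in the variables `(t¹,…,tʲ) ∈ (ℂ^n)^j`. -/
noncomputable def segreIter {n d : ℕ}
    (γ : (Fin n ⊕ Fin d) → MvPowerSeries ((Fin n ⊕ Fin d) ⊕ Fin n) ℂ) :
    (j : ℕ) → (Fin n ⊕ Fin d) → MvPowerSeries (Fin j × Fin n) ℂ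
  | 0, _ => 0
  | (j+1), a =>
    fsubst (Sum.elim
        (fun b => fsubst (fun p => MvPowerSeries.X ((p.1.castSucc : Fin (j+1)), p.2))
          (conjS (segreIter γ j b)))
        (fun i => MvPowerSeries.X ((Fin.last j), i)))
      (γ a)

/-!
The Segre map `γ(ζ,t) = (μ(ζ,t), Q(μ(ζ,t),ζ))` admits a formal map `π` with
`γ(γ̄(Z,t), π(Z,t)) = Z`. The `z`-component `μ(γ̄(Z,t), π) = z` is solved for `π` by the formal
implicit function theorem, since `∂μ/∂t(0)` is invertible; the `w`-component then reads
`Q(z, μ̄, Q̄(μ̄, z, w)) = w`, the reality condition at `χ = μ̄(Z,t)`. As the conjugate of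
`v^{j+1}(t^{[j]}, t^{j+1})` is `γ̄(v^j(t^{[j]}), t^{j+1})`, the choice
`ξʲ := π(v^j(t^{[j]}), t^{j+1})` gives `v^{j+2}(t^{[j+1]}, ξʲ) = γ(γ̄(v^j, t^{j+1}), π(v^j, t^{j+1}))
= v^j`.

The implicit function theorem is proved by Picard iteration: after normalising the linear part,
the iteration map raises the order of the difference of two approximate solutions by one.
-/

namespace MvPowerSeries

section Order

variable {σ τ R : Type*} [CommRing R]

theorem degree_le_order_prod_pow {a : σ → MvPowerSeries τ R}
    (ha : ∀ s, constantCoeff (a s) = 0) (d : σ →₀ ℕ) :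
    (d.degree : ℕ∞) ≤ (d.prod fun s k => a s ^ k).order := by
  rw [Finsupp.degree_apply, Nat.cast_sum]
  exact (Finset.sum_le_sum fun s _ => le_order_pow_of_constantCoeff_eq_zero _ (ha s)).trans
    (le_order_prod _ _)

theorem coeff_prod_pow_eq_zero {a : σ → MvPowerSeries τ R}
    (ha : ∀ s, constantCoeff (a s) = 0) {d : σ →₀ ℕ} {e : τ →₀ ℕ} (h : e.degree < d.degree) :
    coeff e (d.prod fun s k => a s ^ k) = 0 :=
  coeff_of_lt_order ((Nat.cast_lt.2 h).trans_le (degree_le_order_prod_pow ha d))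

theorem constantCoeff_subst_of_constantCoeff_zero [Finite σ] {a : σ → MvPowerSeries τ R}
    (ha : ∀ s, constantCoeff (a s) = 0) (f : MvPowerSeries σ R) :
    constantCoeff (subst a f) = constantCoeff f := by
  rw [← coeff_zero_eq_constantCoeff_apply, coeff_subst (hasSubst_of_constantCoeff_zero ha),
    finsum_eq_single _ 0 fun d hd => ?_]
  · simp
  · rw [coeff_prod_pow_eq_zero ha, smul_zero]
    simpa [pos_iff_ne_zero, Finsupp.degree_eq_zero_iff] using hd

theorem add_le_order_mul_sub_mul {A B C D : MvPowerSeries τ R} {E m k : ℕ∞}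
    (hAB : E + m ≤ (A - B).order + 1) (hB : m ≤ B.order)
    (hCD : E + k ≤ (C - D).order + 1) (hC : k ≤ C.order) :
    E + (m + k) ≤ (A * C - B * D).order + 1 := calc
  E + (m + k) ≤ min ((A - B).order + 1 + C.order) (B.order + ((C - D).order + 1)) :=
    le_min (by rw [← add_assoc]; gcongr) (by rw [add_left_comm]; gcongr)
  _ = min ((A - B).order + C.order) (B.order + (C - D).order) + 1 := by
    rw [← min_add_add_right]; congr 1 <;> ring
  _ ≤ min ((A - B) * C).order (B * (C - D)).order + 1 := by gcongr <;> exact le_order_mul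
  _ ≤ (A * C - B * D).order + 1 := by
    rw [show A * C - B * D = (A - B) * C + B * (C - D) by ring]
    gcongr
    exact min_order_le_add

theorem add_sum_le_order_prod_sub_prod {ι : Type*} [DecidableEq ι] (s : Finset ι)
    {x y : ι → MvPowerSeries τ R} {E : ℕ∞} {k : ι → ℕ∞}
    (hx : ∀ i ∈ s, k i ≤ (x i).order) (hy : ∀ i ∈ s, k i ≤ (y i).order)
    (hxy : ∀ i ∈ s, E + k i ≤ (x i - y i).order + 1) :
    E + ∑ i ∈ s, k i ≤ (∏ i ∈ s, x i - ∏ i ∈ s, y i).order + 1 := by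
  induction s using Finset.induction_on with
  | empty => simp
  | insert i s hi ih =>
    simp only [Finset.mem_insert, forall_eq_or_imp] at hx hy hxy
    rw [Finset.sum_insert hi, Finset.prod_insert hi, Finset.prod_insert hi]
    exact add_le_order_mul_sub_mul hxy.1 hy.1 (ih hx.2 hy.2 hxy.2)
      ((Finset.sum_le_sum hx.2).trans (le_order_prod _ _))

theorem add_degree_le_order_prod_pow_sub_prod_pow {a b : σ → MvPowerSeries τ R}
    (ha : ∀ s, constantCoeff (a s) = 0) (hb : ∀ s, constantCoeff (b s) = 0) {E : ℕ∞}
    (hab : ∀ s, E ≤ (a s - b s).order) (d : σ →₀ ℕ) :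
    E + d.degree ≤ ((d.prod fun s k => a s ^ k) - d.prod fun s k => b s ^ k).order + 1 := by
  classical
  have hpow : ∀ s, E + d s ≤ (a s ^ d s - b s ^ d s).order + 1 := fun s => by
    simpa using add_sum_le_order_prod_sub_prod (Finset.range (d s)) (k := fun _ => 1)
      (fun _ _ => one_le_order_iff_constCoeff_eq_zero.2 (ha s))
      (fun _ _ => one_le_order_iff_constCoeff_eq_zero.2 (hb s))
      (fun _ _ => by gcongr; exact hab s)
  simpa [Finsupp.degree_apply, Finsupp.prod] using add_sum_le_order_prod_sub_prod d.support
    (fun s _ => le_order_pow_of_constantCoeff_eq_zero _ (ha s))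
    (fun s _ => le_order_pow_of_constantCoeff_eq_zero _ (hb s)) (fun s _ => hpow s)

theorem _root_.Finsupp.exists_eq_single_of_degree_eq_one {d : σ →₀ ℕ} (h : d.degree = 1) :
    ∃ s, d = Finsupp.single s 1 := by
  obtain ⟨s, hs⟩ := (Finsupp.support_nonempty_iff (f := d)).2 (by rintro rfl; simp at h)
  have hle : Finsupp.single s 1 ≤ d :=
    Finsupp.single_le_iff.2 (Nat.one_le_iff_ne_zero.2 (Finsupp.mem_support_iff.1 hs))
  have hrest : (d - Finsupp.single s 1).degree = 0 := by
    have := map_add Finsupp.degree (Finsupp.single s 1) (d - Finsupp.single s 1)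
    rw [add_tsub_cancel_of_le hle, h, Finsupp.degree_single] at this
    omega
  exact ⟨s, by rw [← add_tsub_cancel_of_le hle, (Finsupp.degree_eq_zero_iff _).1 hrest, add_zero]⟩

/-- Monomials of degree `≥ 2` gain one order on the difference `a - b`; those of degree one
contribute `a s - b s` itself, hence the hypothesis `hf`. -/
theorem add_one_le_order_subst_sub_subst [Finite σ] {a b : σ → MvPowerSeries τ R}
    (ha : ∀ s, constantCoeff (a s) = 0) (hb : ∀ s, constantCoeff (b s) = 0) {E : ℕ∞}
    (hab : ∀ s, E ≤ (a s - b s).order) {f : MvPowerSeries σ R}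
    (hf : ∀ s, coeff (Finsupp.single s 1) f ≠ 0 → a s = b s) :
    E + 1 ≤ (subst a f - subst b f).order := by
  refine le_order fun e he => ?_
  rw [map_sub, coeff_subst (hasSubst_of_constantCoeff_zero ha),
    coeff_subst (hasSubst_of_constantCoeff_zero hb), sub_eq_zero]
  refine finsum_congr fun d => ?_
  by_cases hd0 : d = 0
  · simp [hd0]
  by_cases hd1 : ∃ s, d = Finsupp.single s 1
  · obtain ⟨s, rfl⟩ := hd1
    by_cases hfs : coeff (Finsupp.single s 1) f = 0
    · simp [hfs]
    · simp [hf s hfs]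
  have hd2 : 2 ≤ d.degree := by
    have h0 : d.degree ≠ 0 := fun h => hd0 ((Finsupp.degree_eq_zero_iff d).1 h)
    have h1 : d.degree ≠ 1 := fun h => hd1 (Finsupp.exists_eq_single_of_degree_eq_one h)
    omega
  have hord : E + 1 ≤ ((d.prod fun s k => a s ^ k) - d.prod fun s k => b s ^ k).order := by
    rw [← ENat.add_le_add_iff_right ENat.one_ne_top]
    calc E + 1 + 1 ≤ E + d.degree := by rw [add_assoc]; gcongr; exact_mod_cast hd2
      _ ≤ _ := add_degree_le_order_prod_pow_sub_prod_pow ha hb hab d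
  rw [← sub_eq_zero, ← smul_sub, ← map_sub, coeff_of_lt_order (he.trans_le hord), smul_zero]

end Order

theorem exists_fixedPoint_of_order_contracting {ι P R : Type*} [CommRing R]
    (T : (ι → MvPowerSeries P R) → ι → MvPowerSeries P R)
    (hT0 : ∀ x, (∀ i, constantCoeff (x i) = 0) → ∀ i, constantCoeff (T x i) = 0)
    (hT : ∀ x y, (∀ i, constantCoeff (x i) = 0) → (∀ i, constantCoeff (y i) = 0) →
      ∀ E : ℕ∞, (∀ i, E ≤ (x i - y i).order) → ∀ i, E + 1 ≤ (T x i - T y i).order) :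
    ∃ x, (∀ i, constantCoeff (x i) = 0) ∧ T x = x := by
  set u : ℕ → ι → MvPowerSeries P R := fun k => T^[k] 0
  have hu_succ : ∀ k, u (k + 1) = T (u k) := fun k => Function.iterate_succ_apply' T k 0
  have hu0 : ∀ k i, constantCoeff (u k i) = 0 := by
    intro k
    induction k with
    | zero => simp [u]
    | succ k ih => rw [hu_succ]; exact hT0 _ ih
  have hu_cauchy : ∀ k l : ℕ, ∀ i, (k : ℕ∞) ≤ (u (k + l) i - u k i).order := by
    intro k
    induction k with
    | zero => simp
    | succ k ih =>
      intro l i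
      rw [Nat.add_right_comm, hu_succ, hu_succ, Nat.cast_succ]
      exact hT _ _ (hu0 _) (hu0 _) k (ih l) i
  -- the coefficient of degree `m` is stable from the `(m + 1)`-st iterate on
  let x : ι → MvPowerSeries P R := fun i e => coeff e (u (e.degree + 1) i)
  have hx : ∀ (k : ℕ) i, (k : ℕ∞) ≤ (x i - u k i).order := by
    refine fun k i => le_order fun e he => ?_
    obtain ⟨l, rfl⟩ := Nat.exists_eq_add_of_lt (Nat.cast_lt.1 he)
    rw [map_sub, sub_eq_zero, Nat.add_right_comm]
    change coeff e (u (e.degree + 1) i) = _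
    rw [eq_comm, ← sub_eq_zero, ← map_sub]
    exact coeff_of_lt_order ((Nat.cast_lt.2 e.degree.lt_succ_self).trans_le (hu_cauchy _ l i))
  refine ⟨x, fun i => hu0 1 i, funext fun i => ?_⟩
  rw [← sub_eq_zero, ← order_eq_top_iff, ENat.eq_top_iff_forall_ge]
  intro k
  have hTx := hT x (u k) (fun i => hu0 1 i) (hu0 k) k (hx k) i
  rw [← hu_succ] at hTx
  have hx' := hx (k + 1) i
  rw [← order_neg, neg_sub, Nat.cast_succ] at hx'
  calc (k : ℕ∞) ≤ min (T x i - u (k + 1) i).order (u (k + 1) i - x i).order :=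
        le_min (le_self_add.trans hTx) (le_self_add.trans hx')
    _ ≤ (T x i - u (k + 1) i + (u (k + 1) i - x i)).order := min_order_le_add
    _ = (T x i - x i).order := by rw [sub_add_sub_cancel]

section ImplicitFunction

variable {S P R ι : Type*} [CommRing R]

theorem exists_add_subst_eq [Finite S] [Finite ι] (r : ι → MvPowerSeries (S ⊕ ι) R)
    (hr0 : ∀ i, constantCoeff (r i) = 0)
    (hr1 : ∀ i k, coeff (Finsupp.single (Sum.inr k) 1) (r i) = 0)
    {φ : S → MvPowerSeries P R} (hφ : ∀ s, constantCoeff (φ s) = 0)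
    {h : ι → MvPowerSeries P R} (hh : ∀ i, constantCoeff (h i) = 0) :
    ∃ π : ι → MvPowerSeries P R, (∀ i, constantCoeff (π i) = 0) ∧
      ∀ i, π i + subst (Sum.elim φ π) (r i) = h i := by
  have hφπ : ∀ π : ι → MvPowerSeries P R, (∀ i, constantCoeff (π i) = 0) →
      ∀ v, constantCoeff (Sum.elim φ π v) = 0 := fun π hπ => Sum.forall.2 ⟨hφ, hπ⟩
  obtain ⟨π, hπ0, hπ⟩ := exists_fixedPoint_of_order_contracting
    (fun π i => h i - subst (Sum.elim φ π) (r i))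
    (fun π hπ i => by
      rw [map_sub, hh, constantCoeff_subst_of_constantCoeff_zero (hφπ π hπ), hr0, sub_zero])
    (fun x y hx hy E hxy i => by
      rw [sub_sub_sub_cancel_left, ← neg_sub, order_neg]
      refine add_one_le_order_subst_sub_subst (hφπ x hx) (hφπ y hy)
        (Sum.forall.2 ⟨fun s => by simp, hxy⟩) fun v hv => ?_
      rcases v with s | k
      · rfl
      · exact absurd (hr1 i k) hv)
  exact ⟨π, hπ0, fun i => eq_sub_iff_add_eq.1 (congrFun hπ i).symm⟩

theorem _root_.Matrix.sum_smul_sum_smul {M : Type*} [AddCommMonoid M] [Module R M] [Fintype ι]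
    (A B : Matrix ι ι R) (F : ι → M) (i : ι) :
    ∑ k, A i k • ∑ l, B k l • F l = ∑ l, (A * B) i l • F l := by
  simp_rw [Finset.smul_sum, smul_smul, Matrix.mul_apply, Finset.sum_smul]
  exact Finset.sum_comm

theorem subst_sum_smul [Finite S] [Fintype ι] {a : S → MvPowerSeries P R} (ha : HasSubst a)
    (c : ι → R) (F : ι → MvPowerSeries S R) :
    subst a (∑ k, c k • F k) = ∑ k, c k • subst a (F k) := by
  rw [← coe_substAlgHom ha, map_sum]
  simp only [map_smul]

/-- The formal implicit function theorem, with the parameters `S` already substituted by `φ`. -/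
theorem exists_subst_eq_of_isUnit_det [Finite S] [Fintype ι] [DecidableEq ι]
    (f : ι → MvPowerSeries (S ⊕ ι) R) (hf0 : ∀ i, constantCoeff (f i) = 0)
    (hdet : IsUnit (Matrix.of fun i j => coeff (Finsupp.single (Sum.inr j) 1) (f i)).det)
    {φ : S → MvPowerSeries P R} (hφ : ∀ s, constantCoeff (φ s) = 0)
    {h : ι → MvPowerSeries P R} (hh : ∀ i, constantCoeff (h i) = 0) :
    ∃ π : ι → MvPowerSeries P R, (∀ i, constantCoeff (π i) = 0) ∧
      ∀ i, subst (Sum.elim φ π) (f i) = h i := by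
  classical
  set A := Matrix.of fun i j => coeff (Finsupp.single (Sum.inr j) 1) (f i)
  set B := A⁻¹
  set f' : ι → MvPowerSeries (S ⊕ ι) R := fun i => ∑ k, B i k • f k
  have hr0 : ∀ i, constantCoeff (f' i - X (Sum.inr i)) = 0 := fun i => by simp [f', hf0]
  have hr1 : ∀ i k, coeff (Finsupp.single (Sum.inr k) 1) (f' i - X (Sum.inr i)) = 0 := by
    intro i k
    rw [map_sub, map_sum, coeff_X]
    simp only [map_smul, smul_eq_mul]
    change ∑ l, B i l * A l k - _ = 0
    rw [← Matrix.mul_apply, Matrix.nonsing_inv_mul A hdet, Matrix.one_apply]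
    simp [Finsupp.single_left_inj, eq_comm]
  obtain ⟨π, hπ0, hπ⟩ := exists_add_subst_eq _ hr0 hr1 hφ
    (h := fun i => ∑ k, B i k • h k) (fun i => by simp [hh])
  have ha : HasSubst (Sum.elim φ π) := hasSubst_of_constantCoeff_zero (Sum.forall.2 ⟨hφ, hπ0⟩)
  have hf' : ∀ i, subst (Sum.elim φ π) (f' i) = ∑ k, B i k • h k := fun i => by
    rw [← hπ i, ← show subst (Sum.elim φ π) (X (Sum.inr i) : MvPowerSeries (S ⊕ ι) R) = π i from
      subst_X ha _, ← subst_add ha, add_sub_cancel]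
  have hAB := Matrix.mul_nonsing_inv A hdet
  refine ⟨π, hπ0, fun i => ?_⟩
  calc subst (Sum.elim φ π) (f i) = subst (Sum.elim φ π) (∑ k, A i k • f' k) := by
        rw [Matrix.sum_smul_sum_smul, hAB]; simp [Matrix.one_apply]
    _ = h i := by
        rw [subst_sum_smul ha]
        simp_rw [hf']
        rw [Matrix.sum_smul_sum_smul, hAB]
        simp [Matrix.one_apply]

end ImplicitFunction

end MvPowerSeries

open MvPowerSeries

theorem coeff_fsubst {σ τ : Type*} [Fintype σ] [DecidableEq σ]
    (a : σ → MvPowerSeries τ ℂ) (f : MvPowerSeries σ ℂ) (e : τ →₀ ℕ) :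
    coeff e (fsubst a f) = ∑ m ∈ Finset.Iic (Finsupp.equivFunOnFinite.symm fun _ => e.degree),
      coeff m f * coeff e (∏ s, a s ^ m s) := by
  simp only [← smul_eq_mul, ← map_smul, ← map_sum]
  rfl

theorem fsubst_eq_subst {σ τ : Type*} [Fintype σ] [DecidableEq σ]
    {a : σ → MvPowerSeries τ ℂ} (ha : ∀ s, constantCoeff (a s) = 0) (f : MvPowerSeries σ ℂ) :
    fsubst a f = subst a f := by
  ext e
  rw [coeff_fsubst, coeff_subst (hasSubst_of_constantCoeff_zero ha),
    finsum_eq_sum_of_support_subset _ fun d hd => ?_]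
  · refine Finset.sum_congr rfl fun d _ => ?_
    rw [smul_eq_mul, Finsupp.prod_fintype _ _ fun _ => pow_zero _]
  · have hle : d.degree ≤ e.degree :=
      not_lt.1 fun hlt => hd (by simp only [coeff_prod_pow_eq_zero ha hlt, smul_zero])
    simpa [Finsupp.le_def] using fun s => (Finsupp.le_degree s d).trans hle

section Conj

variable {σ τ : Type*}

theorem conjS_eq_map (f : MvPowerSeries σ ℂ) : conjS f = map (starRingEnd ℂ) f := rfl

@[simp]
theorem constantCoeff_conjS (f : MvPowerSeries σ ℂ) :
    constantCoeff (conjS f) = starRingEnd ℂ (constantCoeff f) := by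
  simp [conjS_eq_map]

@[simp]
theorem conjS_conjS (f : MvPowerSeries σ ℂ) : conjS (conjS f) = f := by
  ext e; simp [conjS_eq_map]

@[simp]
theorem conjS_X (s : σ) : conjS (X s : MvPowerSeries σ ℂ) = X s := map_X (starRingEnd ℂ) s

theorem conjS_subst [Finite σ] {a : σ → MvPowerSeries τ ℂ} (ha : ∀ s, constantCoeff (a s) = 0)
    (f : MvPowerSeries σ ℂ) : conjS (subst a f) = subst (fun s => conjS (a s)) (conjS f) :=
  map_subst (hasSubst_of_constantCoeff_zero ha) (h := starRingEnd ℂ) f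

end Conj

section Segre

variable {n d : ℕ} {Q : Fin d → MvPowerSeries (Fin n ⊕ (Fin n ⊕ Fin d)) ℂ}
  {μ : Fin n → MvPowerSeries ((Fin n ⊕ Fin d) ⊕ Fin n) ℂ}

theorem constantCoeff_pd {α : Type*} (s : α) (f : MvPowerSeries α ℂ) :
    constantCoeff (pd s f) = coeff (Finsupp.single s 1) f := by
  rw [← coeff_zero_eq_constantCoeff_apply, coeff_apply]
  simp [pd]

theorem gamFam_inr (hμ0 : ∀ i, constantCoeff (μ i) = 0) (k : Fin d) :
    gamFam Q μ (Sum.inr k) = subst (Sum.elim μ fun a => X (Sum.inl a)) (Q k) :=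
  fsubst_eq_subst (by simp [Sum.forall, hμ0]) _

theorem constantCoeff_gamFam (hQ0 : ∀ k, constantCoeff (Q k) = 0)
    (hμ0 : ∀ i, constantCoeff (μ i) = 0) (a : Fin n ⊕ Fin d) :
    constantCoeff (gamFam Q μ a) = 0 := by
  rcases a with i | k
  · exact hμ0 i
  · rw [gamFam_inr hμ0, constantCoeff_subst_of_constantCoeff_zero (by simp [Sum.forall, hμ0]),
      hQ0]

/-- The reality condition `Q(z, χ, Q̄(χ, z, w)) = w`, evaluated at arbitrary series `z, χ, w`. -/
theorem RealityCondition.subst_eq (hreal : RealityCondition Q)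
    (hQ0 : ∀ k, constantCoeff (Q k) = 0) {τ : Type*} {z χ : Fin n → MvPowerSeries τ ℂ}
    {w : Fin d → MvPowerSeries τ ℂ} (hz : ∀ i, constantCoeff (z i) = 0)
    (hχ : ∀ i, constantCoeff (χ i) = 0) (hw : ∀ k, constantCoeff (w k) = 0) (k : Fin d) :
    subst (Sum.elim z (Sum.elim χ fun t => subst (Sum.elim χ (Sum.elim z w)) (conjS (Q t))))
      (Q k) = w k := by
  have h := hreal k
  simp (disch := simp [Sum.forall, constantCoeff_subst_of_constantCoeff_zero, hQ0]) only
    [fsubst_eq_subst] at h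
  have hθ : HasSubst (Sum.elim (Sum.elim z w) χ) :=
    hasSubst_of_constantCoeff_zero (by simp [Sum.forall, hz, hw, hχ])
  rw [← show subst _ (X (Sum.inl (Sum.inr k)) : MvPowerSeries ((Fin n ⊕ Fin d) ⊕ Fin n) ℂ) = w k
      from subst_X hθ _, ← h, subst_comp_subst_apply (hasSubst_of_constantCoeff_zero (by
        simp [Sum.forall, constantCoeff_subst_of_constantCoeff_zero, hQ0])) hθ]
  congr 1
  funext v
  rcases v with i | c | t
  · simp [subst_X hθ]
  · simp [subst_X hθ]
  · simp only [Sum.elim_inr]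
    rw [subst_comp_subst_apply (hasSubst_of_constantCoeff_zero (by simp [Sum.forall])) hθ]
    congr 1
    funext v
    rcases v with i | i | k <;> simp [subst_X hθ]

/-- The identity `γ(γ̄(Z,t), π(Z,t)) = Z`. -/
theorem exists_subst_conjS_gamFam_eq_X (hQ0 : ∀ k, constantCoeff (Q k) = 0)
    (hreal : RealityCondition Q) (hμ0 : ∀ i, constantCoeff (μ i) = 0)
    (hμt : Matrix.det (fun i j => constantCoeff (pd (Sum.inr j) (μ i))) ≠ 0) :
    ∃ π : Fin n → MvPowerSeries ((Fin n ⊕ Fin d) ⊕ Fin n) ℂ,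
      (∀ i, constantCoeff (π i) = 0) ∧
      ∀ a, subst (Sum.elim (fun b => conjS (gamFam Q μ b)) π) (gamFam Q μ a) = X (Sum.inl a) := by
  have hμX : ∀ v, constantCoeff (Sum.elim μ (fun a => X (Sum.inl a)) v) = 0 :=
    Sum.forall.2 ⟨hμ0, fun _ => constantCoeff_X _⟩
  have hγ0 : ∀ b, constantCoeff (conjS (gamFam Q μ b)) = 0 := fun b => by
    simp [constantCoeff_gamFam hQ0 hμ0]
  simp only [constantCoeff_pd] at hμt
  obtain ⟨π, hπ0, hπ⟩ := exists_subst_eq_of_isUnit_det μ hμ0 (isUnit_iff_ne_zero.2 hμt) hγ0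
    (h := fun i => X (Sum.inl (Sum.inl i))) fun _ => constantCoeff_X _
  refine ⟨π, hπ0, ?_⟩
  have hu : HasSubst (Sum.elim (fun b => conjS (gamFam Q μ b)) π) :=
    hasSubst_of_constantCoeff_zero (Sum.forall.2 ⟨hγ0, hπ0⟩)
  rintro (i | k)
  · exact hπ i
  rw [gamFam_inr hμ0, subst_comp_subst_apply (hasSubst_of_constantCoeff_zero hμX) hu]
  refine Eq.trans ?_ (hreal.subst_eq hQ0 (z := fun i => X (Sum.inl (Sum.inl i)))
    (χ := fun i => conjS (μ i)) (w := fun k => X (Sum.inl (Sum.inr k)))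
    (fun _ => constantCoeff_X _) (fun i => by simp [hμ0]) (fun _ => constantCoeff_X _) k)
  congr 1
  funext v
  rcases v with i | c | t
  · exact hπ i
  · exact subst_X hu _
  · simp only [Sum.elim_inr, Sum.elim_inl, subst_X hu, gamFam_inr hμ0, conjS_subst hμX]
    congr 1
    funext v
    rcases v with i | i | k <;> simp

end Segre

section SegreIter

variable {n d : ℕ} {γ : (Fin n ⊕ Fin d) → MvPowerSeries ((Fin n ⊕ Fin d) ⊕ Fin n) ℂ}

theorem segreIter_succ_eq_subst (j : ℕ) (hj : ∀ b, constantCoeff (segreIter γ j b) = 0)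
    (a : Fin n ⊕ Fin d) :
    segreIter γ (j + 1) a = subst (Sum.elim
        (fun b => subst (fun p => X ((p.1.castSucc : Fin (j + 1)), p.2)) (conjS (segreIter γ j b)))
        (fun i => X ((Fin.last j), i))) (γ a) := by
  rw [segreIter]
  simp (disch := simp [Sum.forall, constantCoeff_subst_of_constantCoeff_zero, hj]) only
    [fsubst_eq_subst]

theorem constantCoeff_segreIter (hγ0 : ∀ a, constantCoeff (γ a) = 0) (j : ℕ)
    (a : Fin n ⊕ Fin d) : constantCoeff (segreIter γ j a) = 0 := by
  induction j generalizing a with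
  | zero => exact map_zero _
  | succ j ih =>
    rw [segreIter_succ_eq_subst j ih, constantCoeff_subst_of_constantCoeff_zero, hγ0]
    simp [Sum.forall, constantCoeff_subst_of_constantCoeff_zero, ih]

theorem conjS_segreIter_succ (hγ0 : ∀ a, constantCoeff (γ a) = 0) (j : ℕ) (b : Fin n ⊕ Fin d) :
    conjS (segreIter γ (j + 1) b) = subst (Sum.elim
      (fun b => subst (fun p => X ((p.1.castSucc : Fin (j + 1)), p.2)) (segreIter γ j b))
      fun i => X ((Fin.last j), i)) (conjS (γ b)) := by
  have hv0 := constantCoeff_segreIter hγ0 j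
  rw [segreIter_succ_eq_subst j hv0, conjS_subst (by
    simp [Sum.forall, constantCoeff_subst_of_constantCoeff_zero, hv0])]
  congr 1
  funext v
  rcases v with b | i <;> simp [conjS_subst]

theorem segreIter_descend (hγ0 : ∀ a, constantCoeff (γ a) = 0)
    {π : Fin n → MvPowerSeries ((Fin n ⊕ Fin d) ⊕ Fin n) ℂ} (hπ0 : ∀ i, constantCoeff (π i) = 0)
    (hπ : ∀ a, subst (Sum.elim (fun b => conjS (γ b)) π) (γ a) = X (Sum.inl a)) (j : ℕ) :
    ∃ ξ : Fin n → MvPowerSeries (Fin (j+1) × Fin n) ℂ,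
      (∀ i, constantCoeff (ξ i) = 0) ∧
      ∀ a : Fin n ⊕ Fin d,
        fsubst (fun p : Fin (j+2) × Fin n =>
            if h : (p.1 : ℕ) < j + 1 then X ((⟨(p.1 : ℕ), h⟩ : Fin (j+1)), p.2) else ξ p.2)
          (segreIter γ (j+2) a) =
        fsubst (fun p : Fin j × Fin n => X ((p.1.castSucc : Fin (j+1)), p.2))
          (segreIter γ j a) := by
  have hv0 := constantCoeff_segreIter hγ0
  -- `W` is the point `(v^j(t^{[j]}), t^{j+1})`, at which `v̄^{j+1} = γ̄(W)` and `ξ = π(W)`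
  set W : ((Fin n ⊕ Fin d) ⊕ Fin n) → MvPowerSeries (Fin (j + 1) × Fin n) ℂ := Sum.elim
    (fun b => subst (fun p => X ((p.1.castSucc : Fin (j + 1)), p.2)) (segreIter γ j b))
    fun i => X ((Fin.last j), i)
  have hW0 : ∀ v, constantCoeff (W v) = 0 := by
    simp [W, Sum.forall, constantCoeff_subst_of_constantCoeff_zero, hv0]
  have hW := hasSubst_of_constantCoeff_zero hW0
  have hu : HasSubst (Sum.elim (fun b => conjS (γ b)) π) :=
    hasSubst_of_constantCoeff_zero (by simp [Sum.forall, hγ0, hπ0])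
  refine ⟨fun i => subst W (π i), fun i => ?_, fun a => ?_⟩
  · rw [constantCoeff_subst_of_constantCoeff_zero hW0, hπ0]
  set ψ : Fin (j + 2) × Fin n → MvPowerSeries (Fin (j + 1) × Fin n) ℂ := fun p =>
    if h : (p.1 : ℕ) < j + 1 then X ((⟨(p.1 : ℕ), h⟩ : Fin (j + 1)), p.2) else subst W (π p.2)
  have hψ0 : ∀ p, constantCoeff (ψ p) = 0 := fun p => by
    simp only [ψ]; split
    · exact constantCoeff_X _
    · rw [constantCoeff_subst_of_constantCoeff_zero hW0, hπ0]
  have hψ := hasSubst_of_constantCoeff_zero hψ0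
  have hψX : (fun p : Fin (j + 1) × Fin n => subst ψ
      (X ((p.1.castSucc : Fin (j + 2)), p.2) : MvPowerSeries (Fin (j + 2) × Fin n) ℂ)) = X :=
    funext fun p => by rw [subst_X hψ]; exact dif_pos p.1.isLt
  rw [fsubst_eq_subst hψ0, fsubst_eq_subst (fun _ => constantCoeff_X _),
    segreIter_succ_eq_subst (j + 1) (hv0 _), subst_comp_subst_apply (hasSubst_of_constantCoeff_zero
      (by simp [Sum.forall, constantCoeff_subst_of_constantCoeff_zero, hv0])) hψ]
  calc _ = subst (fun v => subst W (Sum.elim (fun b => conjS (γ b)) π v)) (γ a) := by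
        congr 1
        funext v
        rcases v with b | i
        · rw [Sum.elim_inl, Sum.elim_inl, subst_comp_subst_apply
            (hasSubst_of_constantCoeff_zero fun _ => constantCoeff_X _) hψ, hψX, subst_self,
            id, conjS_segreIter_succ hγ0]
        · rw [Sum.elim_inr, Sum.elim_inr, subst_X hψ]
          simp [ψ]
    _ = subst W (X (Sum.inl a)) := by rw [← subst_comp_subst_apply hu hW, hπ]
    _ = _ := subst_X hW _

end SegreIter

/-- Descending property of the iterated Segre mappings: for every `j` there is a formal
map `ξʲ(t¹,…,t^{j+1})` with
`v^{j+2}(t¹,…,t^{j+1}, ξʲ(t¹,…,t^{j+1})) = v^j(t¹,…,tʲ)`. -/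
theorem iterated_segre_descend {n d : ℕ}
    (Q : Fin d → MvPowerSeries (Fin n ⊕ (Fin n ⊕ Fin d)) ℂ)
    (hQ0 : ∀ j, MvPowerSeries.constantCoeff (σ := _) (R := ℂ) (Q j) = 0)
    (hreal : RealityCondition Q)
    (μ : Fin n → MvPowerSeries ((Fin n ⊕ Fin d) ⊕ Fin n) ℂ)
    (hμ0 : ∀ i, MvPowerSeries.constantCoeff (σ := _) (R := ℂ) (μ i) = 0)
    (hμt : Matrix.det (fun i j =>
      MvPowerSeries.constantCoeff (σ := _) (R := ℂ) (pd (Sum.inr j) (μ i))) ≠ 0)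
    (j : ℕ) :
    ∃ ξ : Fin n → MvPowerSeries (Fin (j+1) × Fin n) ℂ,
      (∀ i, MvPowerSeries.constantCoeff (σ := _) (R := ℂ) (ξ i) = 0) ∧
      ∀ a : Fin n ⊕ Fin d,
        fsubst (fun p : Fin (j+2) × Fin n =>
            if h : (p.1 : ℕ) < j + 1 then
              MvPowerSeries.X ((⟨(p.1 : ℕ), h⟩ : Fin (j+1)), p.2)
            else ξ p.2)
          (segreIter (gamFam Q μ) (j+2) a) =
        fsubst (fun p : Fin j × Fin n =>
            MvPowerSeries.X ((p.1.castSucc : Fin (j+1)), p.2))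
          (segreIter (gamFam Q μ) j a) := by
  obtain ⟨π, hπ0, hπ⟩ := exists_subst_conjS_gamFam_eq_X hQ0 hreal hμ0 hμt
  exact segreIter_descend (constantCoeff_gamFam hQ0 hμ0) hπ0 hπ j
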